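/- arXiv:1007.4622 — 2 statements merged into one kernel-verified Lean document; each statement's English description precedes it below -/
import Mathlib

section
/- There exists a constant C depending only on h such that for all integers m ≥ 1, ℓ ≥ 0 and 0 ≤ k ≤ 2^ℓ − 1 with 2^ℓ ≤ m, |(2/m)·Σ_{i=1}^{⌊m/2⌋} h_{ℓk}((2i−1)/m)² − ‖h‖²_{L²(ℝ)}| ≤ C·2^ℓ/m; that is, the Riemann sum of h_{ℓk}² over the even grid approximates ‖h_{ℓk}‖²_{L²} = ‖h‖²_{L²} with error of order 2^ℓ/m, uniformly in ℓ and k. -/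
/-!
The substitution `x = 2^ℓ t - k` turns the sum into the midpoint rule for `f = h²` with mesh
`δ = 2^(ℓ+1)/m` on the grid `-k + iδ`. The function `f` is bounded and Lipschitz on every interval
avoiding the finitely many breakpoints of `h`. A cell on which `f` is Lipschitz costs `O(δ²)`, and
only `O(1/δ)` cells meet the support `[0,1]`; each breakpoint lies in at most two cells, each
costing `O(δ)`; the incomplete last cell costs `O(δ)` as well. Altogether the error is
`O(δ) = O(2^ℓ/m)`.
-/

open MeasureTheory Real

/-- `h_{ℓk}(t) := 2^{ℓ/2} h(2^ℓ t − k)`. -/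
noncomputable def hlk (h : ℝ → ℝ) (ℓ k : ℕ) (t : ℝ) : ℝ :=
  (2 : ℝ) ^ ((ℓ : ℝ) / 2) * h ((2 : ℝ) ^ ℓ * t - (k : ℝ))

/-- `h` admits the piecewise Lipschitz derivative `h'` (relative to a finite
partition of `[0,1]`, outside of which `h` vanishes). -/
def HasPiecewiseLipschitzDeriv (h h' : ℝ → ℝ) : Prop :=
  ∃ (N : ℕ) (t : ℕ → ℝ), 0 < N ∧ t 0 = 0 ∧ t N = 1 ∧
    (∀ i < N, t i < t (i + 1)) ∧
    (∀ i < N, ∀ x ∈ Set.Ioo (t i) (t (i + 1)), HasDerivAt h (h' x) x) ∧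
    (∀ i < N, ∃ K : NNReal, LipschitzOnWith K h' (Set.Ioo (t i) (t (i + 1))))

open Set Filter
open scoped NNReal

def PiecewiseLipschitzWith (K : ℝ≥0) (P : Finset ℝ) (f : ℝ → ℝ) : Prop :=
  ∀ a b, (∀ p ∈ P, p ∉ Icc a b) → LipschitzOnWith K f (Icc a b)

theorem LipschitzOnWith.isBounded_image {α : Type*} [PseudoMetricSpace α] {f : α → ℝ}
    {K : ℝ≥0} {s : Set α} (hf : LipschitzOnWith K f s) (hs : Bornology.IsBounded s) :
    Bornology.IsBounded (f '' s) := by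
  obtain ⟨g, hg, hfg⟩ := hf.extend_real
  exact hfg.image_eq ▸ hg.isBounded_image hs

theorem exists_lipschitzOnWith_of_hasDerivAt {f f' : ℝ → ℝ} {s : Set ℝ} {K : ℝ≥0}
    (hs : Convex ℝ s) (hsb : Bornology.IsBounded s) (hf : ∀ x ∈ s, HasDerivAt f (f' x) x)
    (hf' : LipschitzOnWith K f' s) : ∃ C : ℝ≥0, LipschitzOnWith C f s := by
  obtain ⟨C, hC⟩ := isBounded_iff_forall_norm_le.mp (hf'.isBounded_image hsb)
  refine ⟨C.toNNReal, hs.lipschitzOnWith_of_nnnorm_hasDerivWithin_le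
    (fun x hx => (hf x hx).hasDerivWithinAt) fun x hx => ?_⟩
  rw [← NNReal.coe_le_coe, coe_nnnorm, Real.coe_toNNReal']
  exact (hC _ (mem_image_of_mem f' hx)).trans (le_max_left _ _)

section Partition

variable {t : ℕ → ℝ} {N : ℕ}

theorem mem_image_or_mem_Ioo_of_mem_Icc {x : ℝ} (hx : x ∈ Icc (t 0) (t N)) :
    x ∈ (Finset.range (N + 1)).image t ∨ ∃ j < N, x ∈ Ioo (t j) (t (j + 1)) := by
  have hex : ∃ j, x ≤ t j := ⟨N, hx.2⟩
  have hfind : Nat.find hex ≤ N := Nat.find_min' hex hx.2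
  obtain hj | hj := (Nat.find_spec hex).eq_or_lt
  · exact .inl (Finset.mem_image.2 ⟨_, Finset.mem_range.2 (Nat.lt_succ_of_le hfind), hj.symm⟩)
  · obtain ⟨i, hi⟩ := Nat.exists_eq_add_one_of_ne_zero fun (h0 : Nat.find hex = 0) => by
      rw [h0] at hj
      exact hj.not_ge hx.1
    refine .inr ⟨i, by omega, lt_of_not_ge fun hxi => Nat.find_min hex (by omega) hxi, hi ▸ hj⟩

variable {K : ℝ≥0} {h : ℝ → ℝ} (hsupp : ∀ x ∉ Icc (0 : ℝ) 1, h x = 0) (ht0 : t 0 = 0)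
  (htN : t N = 1) (hK : ∀ j < N, LipschitzOnWith K h (Ioo (t j) (t (j + 1))))
include hsupp ht0 htN hK

theorem isBounded_range_of_lipschitzOnWith_Ioo : Bornology.IsBounded (range h) := by
  have hsub : range h ⊆ {0} ∪ h '' ((Finset.range (N + 1)).image t) ∪
      ⋃ j ∈ Finset.range N, h '' Ioo (t j) (t (j + 1)) := by
    rintro _ ⟨x, rfl⟩
    by_cases hx : x ∈ Icc (0 : ℝ) 1
    · rw [← ht0, ← htN] at hx
      obtain hxP | ⟨j, hj, hxj⟩ := mem_image_or_mem_Ioo_of_mem_Icc hx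
      · exact .inl (.inr (mem_image_of_mem h hxP))
      · exact .inr (mem_biUnion (Finset.mem_range.2 hj) (mem_image_of_mem h hxj))
    · exact .inl (.inl (hsupp x hx))
  refine Bornology.IsBounded.subset (.union (.union Bornology.isBounded_singleton
    ((Finset.finite_toSet _).image h).isBounded) ((Bornology.isBounded_biUnion_finset _).2
    fun j hj => ?_)) hsub
  exact (hK j (Finset.mem_range.1 hj)).isBounded_image (Metric.isBounded_Ioo _ _)

theorem piecewiseLipschitzWith_of_lipschitzOnWith_Ioo :
    PiecewiseLipschitzWith K ((Finset.range (N + 1)).image t) h := by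
  intro a b hab
  have hmem : ∀ j ≤ N, t j ∈ (Finset.range (N + 1)).image t := fun j hj =>
    Finset.mem_image_of_mem t (Finset.mem_range.2 (Nat.lt_succ_of_le hj))
  by_cases hout : b < 0 ∨ 1 < a
  · have hzero : ∀ x ∈ Icc a b, h x = 0 := fun x hx => hsupp x fun hx01 => by
      rcases hout with hb | ha <;> linarith [hx.1, hx.2, hx01.1, hx01.2]
    exact LipschitzOnWith.of_dist_le_mul fun x hx y hy => by
      simp only [hzero x hx, hzero y hy, dist_self]; positivity
  simp only [not_or, not_lt] at hout
  rcases lt_or_ge b a with hba | hab'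
  · simp [Icc_eq_empty_of_lt hba]
  have ha0 : t 0 < a := lt_of_not_ge fun ha => hab _ (hmem 0 N.zero_le) ⟨ha, ht0 ▸ hout.1⟩
  obtain hP | ⟨j, hj, hja⟩ := mem_image_or_mem_Ioo_of_mem_Icc ⟨ha0.le, htN ▸ hout.2⟩
  · exact absurd ⟨le_rfl, hab'⟩ (hab a hP)
  have hbj : b < t (j + 1) := lt_of_not_ge fun hb => hab _ (hmem (j + 1) hj) ⟨hja.2.le, hb⟩
  exact (hK j hj).mono fun x hx => ⟨hja.1.trans_le hx.1, hx.2.trans_lt hbj⟩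

end Partition

theorem HasPiecewiseLipschitzDeriv.exists_bound_piecewiseLipschitzWith {h h' : ℝ → ℝ}
    (hsupp : ∀ x ∉ Icc (0 : ℝ) 1, h x = 0) (hd : HasPiecewiseLipschitzDeriv h h') :
    ∃ (P : Finset ℝ) (B K : ℝ≥0), (∀ x, |h x| ≤ B) ∧ PiecewiseLipschitzWith K P h := by
  obtain ⟨N, t, -, ht0, htN, -, hderiv, hlip⟩ := hd
  have hKev : ∀ j ∈ Finset.range N,
      ∀ᶠ K in atTop, LipschitzOnWith K h (Ioo (t j) (t (j + 1))) := by
    intro j hj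
    obtain ⟨K', hK'⟩ := hlip j (Finset.mem_range.1 hj)
    obtain ⟨C, hC⟩ := exists_lipschitzOnWith_of_hasDerivAt (convex_Ioo _ _)
      (Metric.isBounded_Ioo _ _) (hderiv j (Finset.mem_range.1 hj)) hK'
    exact (eventually_ge_atTop C).mono fun K hK => hC.weaken hK
  obtain ⟨K, hK⟩ := ((eventually_all_finset _).2 hKev).exists
  replace hK : ∀ j < N, LipschitzOnWith K h (Ioo (t j) (t (j + 1))) :=
    fun j hj => hK j (Finset.mem_range.2 hj)
  obtain ⟨B, hB⟩ := isBounded_iff_forall_norm_le.1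
    (isBounded_range_of_lipschitzOnWith_Ioo hsupp ht0 htN hK)
  exact ⟨_, B.toNNReal, K, fun x => (hB _ (mem_range_self x)).trans B.le_coe_toNNReal,
    piecewiseLipschitzWith_of_lipschitzOnWith_Ioo hsupp ht0 htN hK⟩

namespace PiecewiseLipschitzWith

variable {K : ℝ≥0} {P : Finset ℝ} {f : ℝ → ℝ}

theorem sq {B : ℝ≥0} (hf : PiecewiseLipschitzWith K P f) (hB : ∀ x, |f x| ≤ B) :
    PiecewiseLipschitzWith (2 * B * K) P (fun x => f x ^ 2) := by
  intro a b hab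
  refine LipschitzOnWith.of_dist_le_mul fun x hx y hy => ?_
  have hxy : |f x - f y| ≤ K * dist x y := by
    simpa only [Real.dist_eq] using (hf a b hab).dist_le_mul x hx y hy
  have hsum : |f x + f y| ≤ 2 * B := (abs_add_le _ _).trans (by linarith [hB x, hB y])
  calc dist (f x ^ 2) (f y ^ 2) = |f x + f y| * |f x - f y| := by
        rw [Real.dist_eq, ← abs_mul]; ring_nf
    _ ≤ 2 * B * (K * dist x y) := mul_le_mul hsum hxy (abs_nonneg _) (by positivity)
    _ = (2 * B * K : ℝ≥0) * dist x y := by push_cast; ring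

theorem continuousAt (hf : PiecewiseLipschitzWith K P f) {x : ℝ} (hx : x ∉ P) :
    ContinuousAt f x := by
  obtain ⟨ε, hε, hball⟩ := Metric.isOpen_iff.1 P.finite_toSet.isClosed.isOpen_compl x hx
  have hIcc : Icc (x - ε / 2) (x + ε / 2) ⊆ Metric.ball x ε := fun y hy => by
    rw [Metric.mem_ball, Real.dist_eq, abs_lt]
    constructor <;> linarith [hy.1, hy.2]
  refine (hf _ _ fun p hp hpI => hball (hIcc hpI) hp).continuousOn.continuousAt
    (Icc_mem_nhds (by linarith) (by linarith))

theorem integrable (hf : PiecewiseLipschitzWith K P f) {M u v : ℝ} (hM : ∀ x, |f x| ≤ M)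
    (hsupp : ∀ x ∉ Icc u v, f x = 0) : Integrable f := by
  have hcont : ContinuousOn f (P : Set ℝ)ᶜ := fun x hx => (hf.continuousAt hx).continuousWithinAt
  have hmeas : AEStronglyMeasurable f := by
    have := hcont.aestronglyMeasurable (μ := volume) P.finite_toSet.measurableSet.compl
    rwa [Measure.restrict_eq_self_of_ae_mem] at this
    exact compl_mem_ae_iff.2 (P.finite_toSet.countable.measure_zero volume)
  have hon : IntegrableOn f (Icc u v) := Integrable.of_bound hmeas.restrict M (ae_of_all _ hM)
  refine (integrableOn_iff_integrable_of_support_subset fun x hx => ?_).1 hon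
  by_contra hx'
  exact hx (hsupp x hx')

end PiecewiseLipschitzWith

section Cell

variable {f : ℝ → ℝ} {a δ : ℝ}

theorem abs_mul_sub_integral_le_of_lipschitzOnWith {K : ℝ≥0} {s : ℝ} (hδ : 0 ≤ δ)
    (hf : LipschitzOnWith K f (Icc a (a + δ))) (hs : s ∈ Icc a (a + δ)) :
    |δ * f s - ∫ x in a..a + δ, f x| ≤ K * δ ^ 2 := by
  have hint : IntervalIntegrable f volume a (a + δ) :=
    hf.continuousOn.intervalIntegrable_of_Icc (by linarith)
  have hconst : δ * f s = ∫ _ in a..a + δ, f s := by simp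
  rw [hconst, ← intervalIntegral.integral_sub intervalIntegrable_const hint]
  have hbound : ∀ x ∈ Set.uIoc a (a + δ), ‖f s - f x‖ ≤ K * δ := fun x hx => by
    rw [uIoc_of_le (by linarith)] at hx
    refine (hf.dist_le_mul s hs x (Ioc_subset_Icc_self hx)).trans
      (mul_le_mul_of_nonneg_left ?_ K.coe_nonneg)
    rw [Real.dist_eq, abs_le]
    constructor <;> linarith [hs.1, hs.2, hx.1, hx.2]
  calc _ ≤ K * δ * |a + δ - a| := intervalIntegral.norm_integral_le_of_norm_le_const hbound
    _ = K * δ ^ 2 := by rw [add_sub_cancel_left, abs_of_nonneg hδ]; ring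

theorem abs_mul_sub_integral_le_of_abs_le {M s : ℝ} (hδ : 0 ≤ δ) (hM : ∀ x, |f x| ≤ M) :
    |δ * f s - ∫ x in a..a + δ, f x| ≤ 2 * M * δ := by
  have hint := intervalIntegral.norm_integral_le_of_norm_le_const (a := a) (b := a + δ)
    fun x _ => (Real.norm_eq_abs _).trans_le (hM x)
  rw [Real.norm_eq_abs, add_sub_cancel_left, abs_of_nonneg hδ] at hint
  calc _ ≤ |δ * f s| + |∫ x in a..a + δ, f x| := abs_sub _ _
    _ ≤ δ * M + M * δ := by
      rw [abs_mul, abs_of_nonneg hδ]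
      exact add_le_add (mul_le_mul_of_nonneg_left (hM s) hδ) hint
    _ = 2 * M * δ := by ring

end Cell

theorem Finset.natCast_card_le_of_forall_mem_Icc {S : Finset ℕ} (hS : S.Nonempty) {lo hi : ℝ}
    (h : ∀ i ∈ S, (i : ℝ) ∈ Set.Icc lo hi) : (S.card : ℝ) ≤ hi - lo + 1 := by
  have hsub : S ⊆ Finset.Icc (S.min' hS) (S.max' hS) := fun i hi =>
    Finset.mem_Icc.2 ⟨S.min'_le i hi, S.le_max' i hi⟩
  have hcard := Finset.card_le_card hsub
  rw [Nat.card_Icc] at hcard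
  have hle : S.min' hS ≤ S.max' hS + 1 := (S.min'_le_max' hS).trans (Nat.le_succ _)
  have hlo := (h _ (S.min'_mem hS)).1
  have hhi := (h _ (S.max'_mem hS)).2
  calc (S.card : ℝ) ≤ ((S.max' hS + 1 - S.min' hS : ℕ) : ℝ) := by exact_mod_cast hcard
    _ ≤ hi - lo + 1 := by rw [Nat.cast_sub hle]; push_cast; linarith

theorem card_grid_cells_meeting_Icc_le {c δ u v : ℝ} (hδ : 0 < δ) (huv : u ≤ v) (n : ℕ) :
    (((Finset.range n).filter fun i : ℕ => c + i * δ ≤ v ∧ u ≤ c + i * δ + δ).card : ℝ) ≤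
      (v - u) / δ + 2 := by
  set S := (Finset.range n).filter fun i : ℕ => c + i * δ ≤ v ∧ u ≤ c + i * δ + δ
  rcases S.eq_empty_or_nonempty with hS | hS
  · rw [hS, Finset.card_empty, Nat.cast_zero]
    have : 0 ≤ (v - u) / δ := div_nonneg (by linarith) hδ.le
    linarith
  refine (Finset.natCast_card_le_of_forall_mem_Icc hS (lo := (u - c) / δ - 1)
    (hi := (v - c) / δ) fun i hi => ?_).trans_eq (by ring)
  obtain ⟨hv, hu⟩ := (Finset.mem_filter.1 hi).2
  exact ⟨by rw [sub_le_iff_le_add, div_le_iff₀ hδ]; linarith, by rw [le_div_iff₀ hδ]; linarith⟩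

section Grid

variable {f : ℝ → ℝ} {K : ℝ≥0} {P : Finset ℝ} {M u v δ : ℝ}
  (hf : PiecewiseLipschitzWith K P f) (hM : ∀ x, |f x| ≤ M) (hsupp : ∀ x ∉ Icc u v, f x = 0)
include hf hM hsupp

theorem abs_midpoint_sub_integral_le (hδ : 0 ≤ δ) (a : ℝ) :
    |δ * f (a + δ / 2) - ∫ x in a..a + δ, f x| ≤
      (∑ p ∈ P, if a ≤ p ∧ p ≤ a + δ then 2 * M * δ else 0) +
        if a ≤ v ∧ u ≤ a + δ then K * δ ^ 2 else 0 := by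
  have hM0 : 0 ≤ M := (abs_nonneg _).trans (hM 0)
  have hterms : ∀ p ∈ P, 0 ≤ if a ≤ p ∧ p ≤ a + δ then 2 * M * δ else 0 := fun p _ => by
    split_ifs <;> positivity
  have hlast : 0 ≤ if a ≤ v ∧ u ≤ a + δ then K * δ ^ 2 else 0 := by split_ifs <;> positivity
  by_cases hbad : ∃ p ∈ P, a ≤ p ∧ p ≤ a + δ
  · obtain ⟨p, hp, hpa⟩ := hbad
    have hsingle := Finset.single_le_sum hterms hp
    rw [if_pos hpa] at hsingle
    linarith [abs_mul_sub_integral_le_of_abs_le (a := a) (s := a + δ / 2) hδ hM]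
  push Not at hbad
  refine le_add_of_nonneg_of_le (Finset.sum_nonneg hterms) ?_
  split_ifs with hmeets
  · exact abs_mul_sub_integral_le_of_lipschitzOnWith hδ
      (hf a (a + δ) fun p hp hpI => (hbad p hp hpI.1).not_ge hpI.2) ⟨by linarith, by linarith⟩
  · have hzero : ∀ x ∈ Icc a (a + δ), f x = 0 := fun x hx => hsupp x fun hxuv => hmeets
      ⟨hx.1.trans hxuv.2, hxuv.1.trans hx.2⟩
    rw [hzero _ ⟨by linarith, by linarith⟩, intervalIntegral.integral_congr (g := fun _ => 0)
      fun x hx => hzero x (uIcc_of_le (by linarith : a ≤ a + δ) ▸ hx)]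
    simp

theorem sum_abs_midpoint_sub_integral_le (hδ : 0 < δ) (huv : u ≤ v) (c : ℝ) (n : ℕ) :
    ∑ i ∈ Finset.range n, |δ * f (c + i * δ + δ / 2) - ∫ x in c + i * δ..c + i * δ + δ, f x| ≤
      δ * (4 * M * P.card + K * (v - u + 2 * δ)) := by
  have hM0 : 0 ≤ M := (abs_nonneg _).trans (hM 0)
  have hcount (p : ℝ) := card_grid_cells_meeting_Icc_le (c := c) hδ (le_refl p) n
  have hmeets := card_grid_cells_meeting_Icc_le (c := c) hδ huv n
  simp only [sub_self, zero_div, zero_add] at hcount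
  calc _ ≤ ∑ i ∈ Finset.range n, ((∑ p ∈ P, if c + i * δ ≤ p ∧ p ≤ c + i * δ + δ
          then 2 * M * δ else 0) + if c + i * δ ≤ v ∧ u ≤ c + i * δ + δ then K * δ ^ 2 else 0) :=
        Finset.sum_le_sum fun i _ => abs_midpoint_sub_integral_le hf hM hsupp hδ.le _
    _ = (∑ p ∈ P, (((Finset.range n).filter fun i : ℕ =>
            c + i * δ ≤ p ∧ p ≤ c + i * δ + δ).card : ℝ) * (2 * M * δ)) +
          (((Finset.range n).filter fun i : ℕ =>
            c + i * δ ≤ v ∧ u ≤ c + i * δ + δ).card : ℝ) * (K * δ ^ 2) := by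
        rw [Finset.sum_add_distrib, Finset.sum_comm]
        simp only [← Finset.sum_filter, Finset.sum_const, nsmul_eq_mul]
    _ ≤ (∑ _p ∈ P, 2 * (2 * M * δ)) + ((v - u) / δ + 2) * (K * δ ^ 2) := by
        gcongr with p
        exact hcount p
    _ = δ * (4 * M * P.card + K * (v - u + 2 * δ)) := by
        rw [Finset.sum_const, nsmul_eq_mul]
        field_simp
        ring

theorem abs_sum_midpoint_sub_integral_le (hδ : 0 < δ) (huv : u ≤ v) {c : ℝ} (hc : c ≤ u) {n : ℕ}
    (hn : v ≤ c + (n + 1) * δ) :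
    |∑ i ∈ Finset.range n, δ * f (c + i * δ + δ / 2) - ∫ x, f x| ≤
      δ * (4 * M * P.card + K * (v - u + 2 * δ) + M) := by
  have hint := hf.integrable hM hsupp
  have hwhole : ∫ x, f x = ∫ x in c..c + (n + 1) * δ, f x := by
    rw [intervalIntegral.integral_of_le (by nlinarith), ← integral_Icc_eq_integral_Ioc,
      setIntegral_eq_integral_of_forall_compl_eq_zero]
    exact fun x hx => hsupp x fun hxuv => hx ⟨hc.trans hxuv.1, hxuv.2.trans hn⟩
  have hsplit : ∫ x in c..c + (n + 1) * δ, f x =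
      (∑ i ∈ Finset.range n, ∫ x in c + i * δ..c + i * δ + δ, f x) +
        ∫ x in c + n * δ..c + n * δ + δ, f x := by
    have := intervalIntegral.sum_integral_adjacent_intervals (a := fun i : ℕ => c + i * δ)
      (n := n + 1) fun i _ => hint.intervalIntegrable
    simp only [Nat.cast_add, Nat.cast_one, add_mul, one_mul, Nat.cast_zero, zero_mul, add_zero,
      ← add_assoc, Finset.sum_range_succ] at this
    rw [add_one_mul, ← add_assoc, ← this]
  have htail : |∫ x in c + n * δ..c + n * δ + δ, f x| ≤ M * δ := by
    have := intervalIntegral.norm_integral_le_of_norm_le_const (a := c + n * δ)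
      (b := c + n * δ + δ) fun x _ => (Real.norm_eq_abs _).trans_le (hM x)
    rwa [Real.norm_eq_abs, add_sub_cancel_left, abs_of_pos hδ] at this
  calc _ = |(∑ i ∈ Finset.range n,
          (δ * f (c + i * δ + δ / 2) - ∫ x in c + i * δ..c + i * δ + δ, f x)) -
        ∫ x in c + n * δ..c + n * δ + δ, f x| := by
        rw [hwhole, hsplit, Finset.sum_sub_distrib, sub_add_eq_sub_sub]
    _ ≤ (∑ i ∈ Finset.range n,
          |δ * f (c + i * δ + δ / 2) - ∫ x in c + i * δ..c + i * δ + δ, f x|) +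
        |∫ x in c + n * δ..c + n * δ + δ, f x| :=
        (abs_sub _ _).trans (add_le_add_left (Finset.abs_sum_le_sum_abs _ _) _)
    _ ≤ δ * (4 * M * P.card + K * (v - u + 2 * δ)) + M * δ :=
        add_le_add (sum_abs_midpoint_sub_integral_le hf hM hsupp hδ huv c n) htail
    _ = δ * (4 * M * P.card + K * (v - u + 2 * δ) + M) := by ring

end Grid

theorem hlk_sq (h : ℝ → ℝ) (ℓ k : ℕ) (t : ℝ) :
    hlk h ℓ k t ^ 2 = 2 ^ ℓ * h (2 ^ ℓ * t - k) ^ 2 := by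
  rw [hlk, mul_pow, ← Real.rpow_mul_natCast zero_le_two, Nat.cast_ofNat,
    div_mul_cancel₀ _ two_ne_zero, Real.rpow_natCast]

theorem two_div_mul_sum_hlk_sq (h : ℝ → ℝ) (ℓ k m : ℕ) :
    (2 / (m : ℝ)) * ∑ i ∈ Finset.Icc 1 (m / 2), hlk h ℓ k ((2 * (i : ℝ) - 1) / m) ^ 2 =
      ∑ i ∈ Finset.range (m / 2), 2 * 2 ^ ℓ / m *
        h (-k + i * (2 * 2 ^ ℓ / m) + 2 * 2 ^ ℓ / m / 2) ^ 2 := by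
  rw [Finset.mul_sum, ← Finset.Ico_add_one_right_eq_Icc, Finset.sum_Ico_eq_sum_range,
    Nat.add_sub_cancel]
  refine Finset.sum_congr rfl fun i _ => ?_
  rw [hlk_sq]
  push_cast
  ring_nf

/-- Riemann-sum approximation of `‖h_{ℓk}‖²_{L²} = ‖h‖²_{L²(ℝ)}` over the even
grid: there is `C` depending only on `h` such that for all `m ≥ 1`, `ℓ ≥ 0`,
`0 ≤ k ≤ 2^ℓ − 1` with `2^ℓ ≤ m`,
`|(2/m) Σ_{i=1}^{⌊m/2⌋} h_{ℓk}((2i−1)/m)² − ‖h‖²_{L²(ℝ)}| ≤ C 2^ℓ/m`. -/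
theorem hlk_riemann_sum_approx
    (h : ℝ → ℝ) (hsupp : ∀ t, t ∉ Set.Icc (0:ℝ) 1 → h t = 0)
    (h' : ℝ → ℝ) (hderiv : HasPiecewiseLipschitzDeriv h h') :
    ∃ C : ℝ, 0 < C ∧ ∀ m ℓ k : ℕ, 1 ≤ m → k < 2 ^ ℓ → 2 ^ ℓ ≤ m →
      |(2 / (m : ℝ)) * ∑ i ∈ Finset.Icc 1 (m / 2),
          (hlk h ℓ k ((2 * (i : ℝ) - 1) / m)) ^ 2
        - ∫ t : ℝ, (h t) ^ 2| ≤ C * 2 ^ ℓ / m := by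
  obtain ⟨P, B, K, hB, hK⟩ := hderiv.exists_bound_piecewiseLipschitzWith hsupp
  have hf := hK.sq hB
  have hfM : ∀ x, |h x ^ 2| ≤ (B : ℝ) ^ 2 := fun x => by
    rw [abs_pow]; exact pow_le_pow_left₀ (abs_nonneg _) (hB x) 2
  have hfsupp : ∀ x ∉ Icc (0 : ℝ) 1, h x ^ 2 = 0 := fun x hx => by rw [hsupp x hx]; ring
  set A : ℝ := 4 * B ^ 2 * P.card + (2 * B * K : ℝ≥0) * 5 + B ^ 2 with hA
  refine ⟨2 * A + 1, by positivity, fun m ℓ k hm hk hℓm => ?_⟩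
  have hm0 : (0 : ℝ) < m := by exact_mod_cast hm
  have hℓm' : (2 : ℝ) ^ ℓ ≤ m := by exact_mod_cast hℓm
  have hk' : (k : ℝ) + 1 ≤ 2 ^ ℓ := by exact_mod_cast hk
  have hm2 : (m : ℝ) ≤ 2 * ((m / 2 : ℕ) + 1) := by
    exact_mod_cast (by omega : m ≤ 2 * (m / 2 + 1))
  set δ : ℝ := 2 * 2 ^ ℓ / m with hδdef
  have hδ : 0 < δ := by positivity
  have hδ2 : δ ≤ 2 := by rw [div_le_iff₀ hm0]; linarith
  have hcover : 1 ≤ -k + ((m / 2 : ℕ) + 1) * δ := by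
    have : (2 : ℝ) ^ ℓ ≤ ((m / 2 : ℕ) + 1) * δ := by
      rw [mul_div_assoc', le_div_iff₀ hm0]; nlinarith
    linarith
  rw [two_div_mul_sum_hlk_sq]
  calc _ ≤ δ * (4 * B ^ 2 * P.card + (2 * B * K : ℝ≥0) * (1 - 0 + 2 * δ) + B ^ 2) :=
        abs_sum_midpoint_sub_integral_le hf hfM hfsupp hδ zero_le_one
          (by linarith [(k.cast_nonneg : (0 : ℝ) ≤ k)]) hcover
    _ ≤ δ * A := by rw [hA]; gcongr; linarith
    _ ≤ (2 * A + 1) * 2 ^ ℓ / m := by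
        rw [hδdef, mul_div_assoc, mul_div_assoc]
        nlinarith [div_pos (pow_pos two_pos ℓ) hm0]
end

section
/- There exists a constant C depending only on h such that for all integers m ≥ 1, ℓ ≥ 0 and 0 ≤ k ≤ 2^ℓ − 1 with 2^ℓ ≤ m, |h_{ℓk}|_{var,m} ≤ C·m^{1/2}. -/
open MeasureTheory Real

/-- The modulus-of-variation norm
`|g|_{var,m} := |g(0) + g(1)| + Σ_{i=1}^m sup_{s,t ∈ [(i−1)/m, i/m]} |g(t) − g(s)|`. -/
noncomputable def varNorm (g : ℝ → ℝ) (m : ℕ) : ℝ :=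
  |g 0 + g 1| + ∑ i ∈ Finset.Icc 1 m,
    ⨆ st : Set.Icc (((i : ℝ) - 1) / m) ((i : ℝ) / m)
            × Set.Icc (((i : ℝ) - 1) / m) ((i : ℝ) / m),
      |g (st.2 : ℝ) - g (st.1 : ℝ)|

/-!
The function `h` has bounded variation on `ℝ`: on each piece of the partition it is Lipschitz
(its derivative is Lipschitz, hence bounded), a jump at a breakpoint adds only a finite amount,
and outside `[0,1]` it vanishes. The oscillations of `h_{ℓk}` over the `m` consecutive
cells sum to at most its variation on `[0,1]`, which is at most `2^{ℓ/2} Var h`, and the term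
`|h_{ℓk}(0) + h_{ℓk}(1)|` is at most `2 · 2^{ℓ/2} sup |h| ≤ 2 · 2^{ℓ/2} Var h`.
Finally `2^{ℓ/2} ≤ √m` because `2^ℓ ≤ m`.
-/

open Set Filter Topology
open scoped NNReal ENNReal

theorem exists_lipschitzOnWith_of_hasDerivAt_of_lipschitzOnWith {f f' : ℝ → ℝ} {s : Set ℝ}
    {K : ℝ≥0} (hs : Convex ℝ s) (hs' : Bornology.IsBounded s)
    (hf : ∀ x ∈ s, HasDerivAt f (f' x) x) (hf' : LipschitzOnWith K f' s) :
    ∃ L : ℝ≥0, LipschitzOnWith L f s := by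
  obtain ⟨g, hg, hf'g⟩ := hf'.extend_real
  obtain ⟨R, hR, hgR⟩ := (hg.isBounded_image hs').exists_pos_norm_le
  refine ⟨R.toNNReal, hs.lipschitzOnWith_of_nnnorm_hasDerivWithin_le
    (fun x hx => (hf x hx).hasDerivWithinAt) fun x hx => ?_⟩
  exact (Real.le_toNNReal_iff_coe_le hR.le).2
    (by simpa [hf'g hx] using hgR _ (mem_image_of_mem g hx))

theorem boundedVariationOn_Icc_of_lipschitzOnWith_Ioo {f : ℝ → ℝ} {a b : ℝ} {K : ℝ≥0}
    (hab : a < b) (hf : LipschitzOnWith K f (Ioo a b)) : BoundedVariationOn f (Icc a b) := by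
  -- `f` may jump at `a` and `b`; the Lipschitz extension `g` of `f|(a,b)` provides the one-sided
  -- limits there, and each endpoint adds the distance from its value to that limit.
  obtain ⟨g, hg, hfg⟩ := hf.extend_real
  have hIoo : BoundedVariationOn f (Ioo a b) := by
    rw [BoundedVariationOn, eVariationOn.eq_of_eqOn hfg]
    exact (hg.locallyBoundedVariationOn univ a b trivial trivial).mono
      (subset_inter (subset_univ _) Ioo_subset_Icc_self)
  have hlim : ∀ c, Tendsto f (𝓝[Ioo a b] c) (𝓝 (g c)) := fun c =>
    ((hg.continuous.tendsto c).mono_left nhdsWithin_le_nhds).congr'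
      (eventuallyEq_nhdsWithin_of_eqOn hfg).symm
  have hIoc : Ioc a b ∩ Iio b = Ioo a b := by ext; grind
  have hIcc : Icc a b ∩ Ioi a = Ioc a b := by ext; grind
  have hright := eVariationOn.eVariationOn_on_inter_Iic_eq_Iio_add_edist (s := Ioc a b)
    (hIoc ▸ right_nhdsWithin_Ioo_neBot hab) (right_mem_Ioc.2 hab) (hIoc ▸ hlim b)
  have hleft := eVariationOn.eVariationOn_on_inter_Ici_eq_Ioi_add_edist (s := Icc a b)
    (by rw [hIcc, nhdsWithin_Ioc_eq_nhdsGT hab]; infer_instance) (left_mem_Icc.2 hab.le)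
    (by rw [hIcc, nhdsWithin_Ioc_eq_nhdsGT hab, ← nhdsWithin_Ioo_eq_nhdsGT hab]; exact hlim a)
  rw [hIoc, inter_eq_left.2 Ioc_subset_Iic_self] at hright
  rw [hIcc, inter_eq_left.2 Icc_subset_Ici_self, hright] at hleft
  rw [BoundedVariationOn, hleft]
  finiteness

theorem boundedVariationOn_Icc_of_forall_Icc_succ {α E : Type*} [LinearOrder α]
    [PseudoEMetricSpace E] {f : α → E} {τ : ℕ → α} {N : ℕ} (hτ : ∀ i < N, τ i ≤ τ (i + 1))
    (hf : ∀ i < N, BoundedVariationOn f (Icc (τ i) (τ (i + 1)))) :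
    BoundedVariationOn f (Icc (τ 0) (τ N)) := by
  set I : ℕ → α := fun i => τ (min i N)
  have hI : Monotone I := monotone_nat_of_le_succ fun i => by
    rcases lt_or_ge i N with hi | hi
    · simpa [I, hi.le, Nat.succ_le_of_lt hi] using hτ i hi
    · simp [I, hi, hi.trans (Nat.le_succ i)]
  have hsum := eVariationOn.sum' f hI (n := N)
  simp only [I, Nat.zero_min, min_self] at hsum
  rw [BoundedVariationOn, ← hsum, ENNReal.sum_ne_top]
  intro i hi
  have hi := Finset.mem_range.1 hi
  rw [min_eq_left hi.le, min_eq_left (Nat.succ_le_of_lt hi)]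
  exact hf i hi

theorem BoundedVariationOn.univ_of_Icc {E : Type*} [NormedAddCommGroup E] {f : ℝ → E} {a b : ℝ}
    (hab : a ≤ b) (hf : BoundedVariationOn f (Icc a b)) (hzero : ∀ x ∉ Icc a b, f x = 0) :
    BoundedVariationOn f univ := by
  have hIio : Iio a ⊆ (Icc a b)ᶜ := fun x hx hx' => not_le.2 hx hx'.1
  have hIoi : Ioi b ⊆ (Icc a b)ᶜ := fun x hx hx' => not_le.2 hx hx'.2
  have hconst : ∀ s ⊆ (Icc a b)ᶜ, eVariationOn f s = 0 := fun s hs =>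
    eVariationOn.constant_on (subsingleton_singleton.anti (by
      rintro _ ⟨x, hx, rfl⟩; exact hzero x (hs hx)))
  have hlim : ∀ {s : Set ℝ} (c : ℝ), s ⊆ (Icc a b)ᶜ → Tendsto f (𝓝[s] c) (𝓝 0) := fun c hs =>
    tendsto_const_nhds.congr' (eventuallyEq_nhdsWithin_of_eqOn fun x hx => (hzero x (hs hx)).symm)
  have hIic := eVariationOn.eVariationOn_on_inter_Iic_eq_Iio_add_edist (s := univ) (a := a)
    (by simpa using nhdsLT_neBot a) (mem_univ a) (by simpa using hlim a hIio)
  have hIci := eVariationOn.eVariationOn_on_inter_Ici_eq_Ioi_add_edist (s := univ) (a := b)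
    (by simpa using nhdsGT_neBot b) (mem_univ b) (by simpa using hlim b hIoi)
  rw [univ_inter, univ_inter, hconst _ hIio, zero_add] at hIic
  rw [univ_inter, univ_inter, hconst _ hIoi, zero_add] at hIci
  rw [BoundedVariationOn, ← Iic_union_Ici (a := b), eVariationOn.union f isGreatest_Iic isLeast_Ici,
    ← Iic_union_Icc_eq_Iic hab, eVariationOn.union f isGreatest_Iic (isLeast_Icc hab), hIic, hIci]
  finiteness

theorem BoundedVariationOn.iSup_abs_sub_le {α : Type*} [LinearOrder α] {g : α → ℝ} {s : Set α}
    (hg : BoundedVariationOn g s) :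
    ⨆ st : s × s, |g (st.2 : α) - g (st.1 : α)| ≤ (eVariationOn g s).toReal :=
  Real.iSup_le (fun st => by simpa [Real.dist_eq] using hg.dist_le st.2.2 st.1.2)
    ENNReal.toReal_nonneg

theorem varNorm_le_of_boundedVariationOn {g : ℝ → ℝ} (hg : BoundedVariationOn g (Icc 0 1))
    (m : ℕ) : varNorm g m ≤ |g 0 + g 1| + (eVariationOn g (Icc 0 1)).toReal := by
  set I : ℕ → ℝ := fun i => i / m
  have hI : Monotone I := fun i j hij => by simp only [I]; gcongr
  have hcell : ∀ j ∈ Finset.range m, Icc (I j) (I (j + 1)) ⊆ Icc 0 1 := by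
    intro j hj
    exact Icc_subset_Icc (by positivity) <|
      div_le_one_of_le₀ (by exact_mod_cast Finset.mem_range.1 hj) (Nat.cast_nonneg m)
  have hsum := eVariationOn.sum' g hI (n := m)
  unfold varNorm
  have hends (j : ℕ) : ((↑(1 + j) : ℝ) - 1) / m = I j ∧ (↑(1 + j) : ℝ) / m = I (j + 1) := by
    simp only [I]; push_cast; constructor <;> ring_nf
  rw [← Finset.Ico_add_one_right_eq_Icc, Finset.sum_Ico_eq_sum_range, Nat.add_sub_cancel]
  gcongr
  calc _ ≤ ∑ j ∈ Finset.range m, (eVariationOn g (Icc (I j) (I (j + 1)))).toReal := by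
        refine Finset.sum_le_sum fun j hj => ?_
        rw [(hends j).1, (hends j).2]
        exact (hg.mono (hcell j hj)).iSup_abs_sub_le
    _ = (eVariationOn g (Icc (I 0) (I m))).toReal := by
        rw [← hsum, ENNReal.toReal_sum fun j hj => hg.mono (hcell j hj)]
    _ ≤ (eVariationOn g (Icc 0 1)).toReal :=
        ENNReal.toReal_mono hg <|
          eVariationOn.mono g (Icc_subset_Icc (by simp [I]) (div_self_le_one _))

theorem eVariationOn_const_mul_comp_affine_le (f : ℝ → ℝ) {a : ℝ} (ha : 0 ≤ a) (b c : ℝ)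
    (s : Set ℝ) :
    eVariationOn (fun t => c * f (a * t - b)) s ≤ ‖c‖₊ * eVariationOn f univ :=
  calc eVariationOn ((c • ·) ∘ f ∘ fun t => a * t - b) s
      ≤ ‖c‖₊ * eVariationOn (f ∘ fun t => a * t - b) s :=
        (lipschitzWith_smul c).lipschitzOnWith.comp_eVariationOn_le (mapsTo_univ _ _)
    _ ≤ ‖c‖₊ * eVariationOn f univ := by
        gcongr
        exact eVariationOn.comp_le_of_monotoneOn f _
          (fun x _ y _ hxy => by gcongr) (mapsTo_univ _ _)

theorem BoundedVariationOn.abs_le_of_eq_zero {f : ℝ → ℝ} (hf : BoundedVariationOn f univ)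
    {y : ℝ} (hy : f y = 0) (x : ℝ) : |f x| ≤ (eVariationOn f univ).toReal := by
  simpa [Real.dist_eq, hy] using hf.dist_le (mem_univ x) (mem_univ y)

theorem two_rpow_half_le_sqrt {ℓ m : ℕ} (h : 2 ^ ℓ ≤ m) : (2 : ℝ) ^ ((ℓ : ℝ) / 2) ≤ √m := by
  rw [Real.sqrt_eq_rpow, div_eq_mul_one_div, Real.rpow_mul zero_le_two, Real.rpow_natCast]
  gcongr
  exact_mod_cast h

theorem HasPiecewiseLipschitzDeriv.boundedVariationOn_Icc {h h' : ℝ → ℝ}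
    (hd : HasPiecewiseLipschitzDeriv h h') : BoundedVariationOn h (Icc 0 1) := by
  obtain ⟨N, τ, -, hτ0, hτN, hlt, hderiv, hlip⟩ := hd
  rw [← hτ0, ← hτN]
  refine boundedVariationOn_Icc_of_forall_Icc_succ (fun i hi => (hlt i hi).le) fun i hi => ?_
  obtain ⟨K, hK⟩ := hlip i hi
  obtain ⟨L, hL⟩ := exists_lipschitzOnWith_of_hasDerivAt_of_lipschitzOnWith (convex_Ioo _ _)
    (Metric.isBounded_Ioo _ _) (hderiv i hi) hK
  exact boundedVariationOn_Icc_of_lipschitzOnWith_Ioo (hlt i hi) hL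

/-- There is `C` depending only on `h` such that for all `m ≥ 1`, `ℓ ≥ 0` and
`0 ≤ k ≤ 2^ℓ − 1` with `2^ℓ ≤ m`, `|h_{ℓk}|_{var,m} ≤ C √m`. -/
theorem hlk_varNorm_bound
    (h : ℝ → ℝ) (hsupp : ∀ t, t ∉ Set.Icc (0:ℝ) 1 → h t = 0)
    (h' : ℝ → ℝ) (hderiv : HasPiecewiseLipschitzDeriv h h') :
    ∃ C : ℝ, 0 < C ∧ ∀ m ℓ k : ℕ, 1 ≤ m → k < 2 ^ ℓ → 2 ^ ℓ ≤ m →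
      varNorm (hlk h ℓ k) m ≤ C * Real.sqrt m := by
  have hbv : BoundedVariationOn h univ :=
    hderiv.boundedVariationOn_Icc.univ_of_Icc zero_le_one hsupp
  set V := (eVariationOn h univ).toReal
  refine ⟨3 * V + 1, by positivity, fun m ℓ k _ _ hm => ?_⟩
  set c : ℝ := 2 ^ ((ℓ : ℝ) / 2)
  have hvar : eVariationOn (hlk h ℓ k) (Icc 0 1) ≤ ‖c‖₊ * eVariationOn h univ :=
    eVariationOn_const_mul_comp_affine_le h (by positivity) _ _ _
  have hbv' : BoundedVariationOn (hlk h ℓ k) (Icc 0 1) := ne_top_of_le_ne_top (by finiteness) hvar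
  have hvar' : (eVariationOn (hlk h ℓ k) (Icc 0 1)).toReal ≤ c * V := by
    simpa [Real.norm_of_nonneg (by positivity : 0 ≤ c)] using
      ENNReal.toReal_mono (by finiteness) hvar
  have hval (t : ℝ) : |hlk h ℓ k t| ≤ c * V := by
    rw [hlk, abs_mul, abs_of_pos (by positivity)]
    gcongr
    exact hbv.abs_le_of_eq_zero (hsupp 2 (by simp)) _
  calc varNorm (hlk h ℓ k) m
      ≤ |hlk h ℓ k 0 + hlk h ℓ k 1| + (eVariationOn (hlk h ℓ k) (Icc 0 1)).toReal :=
        varNorm_le_of_boundedVariationOn hbv' m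
    _ ≤ c * V + c * V + c * V := by grw [abs_add_le, hval, hval, hvar']
    _ = 3 * V * c := by ring
    _ ≤ (3 * V + 1) * √m :=
        mul_le_mul (by linarith) (two_rpow_half_le_sqrt hm) (by positivity) (by positivity)
end
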